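/- Let H be a complete graph on n vertices whose edges have weights in {p, q} with p ≤ q, where the edges of weight p form a graph G. Then the minimum weight of a hamiltonian path in H equals (n−1)p + (q−p)(s* − 1), where s* is the minimum number of vertex-disjoint paths in G needed to partition the vertex set (a path may consist of a single vertex). -/

import Mathlib

/-!
Split a hamiltonian path of `H` at its edges of weight `q`: the pieces are paths of `G`, and
a path with `b` such edges weighs `(n - 1)p + (q - p)b` and splits into `b + 1` pieces.
Conversely, concatenating the `t` paths of a path partition of `G` gives a hamiltonian path
of `H` with at most `t - 1` edges of weight `q`. So the two minima correspond under
`t ↦ (n - 1)p + (q - p)(t - 1)`.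
-/

/-- The weight of a path, listed as a list of vertices: the sum of `w` over
consecutive pairs. -/
def pathWeight {V : Type*} (w : V → V → ℕ) : List V → ℕ
  | a :: b :: rest => w a b + pathWeight w (b :: rest)
  | _ => 0

namespace List

variable {α : Type*} (r : α → α → Prop) [DecidableRel r]

def chainBreaks : List α → ℕ
  | a :: b :: rest => (if r a b then 0 else 1) + chainBreaks (b :: rest)
  | _ => 0

variable {r}

theorem chainBreaks_eq_zero_of_isChain : ∀ {l : List α}, l.IsChain r → l.chainBreaks r = 0
  | [], _ | [_], _ => rfl
  | a :: b :: rest, h => by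
      rw [isChain_cons_cons] at h
      simp [chainBreaks, h.1, chainBreaks_eq_zero_of_isChain h.2]

theorem chainBreaks_append_le : ∀ l m : List α,
    (l ++ m).chainBreaks r ≤ l.chainBreaks r + 1 + m.chainBreaks r
  | [], _ => by simp
  | [a], [] => by simp [chainBreaks]
  | [a], b :: m => by
      simp only [singleton_append, chainBreaks]
      split <;> omega
  | a :: b :: l, m => by
      have ih := chainBreaks_append_le (b :: l) m
      simp only [cons_append, chainBreaks] at ih ⊢
      omega

theorem chainBreaks_flatten_le : ∀ {Ls : List (List α)}, (∀ P ∈ Ls, P.IsChain r) →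
    Ls.flatten.chainBreaks r ≤ Ls.length - 1
  | [], _ => by simp [chainBreaks]
  | [P], h => by simp [chainBreaks_eq_zero_of_isChain (h P mem_cons_self)]
  | P :: Q :: Ls, h => by
      have ih := chainBreaks_flatten_le (Ls := Q :: Ls) fun R hR => h R (mem_cons_of_mem _ hR)
      have hP := chainBreaks_eq_zero_of_isChain (h P mem_cons_self)
      have := chainBreaks_append_le (r := r) P (Q :: Ls).flatten
      simp only [flatten_cons, length_cons] at ih this ⊢
      omega

-- The first chain is kept apart: the induction step either prepends `a` to it or closes it.
theorem exists_chain_split (a : α) : ∀ l : List α, ∃ (P : List α) (Ls : List (List α)),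
    (a :: P).IsChain r ∧ (∀ Q ∈ Ls, Q ≠ [] ∧ Q.IsChain r) ∧
      (a :: P) ++ Ls.flatten = a :: l ∧ Ls.length = (a :: l).chainBreaks r
  | [] => ⟨[], [], by simp, by simp, by simp, rfl⟩
  | b :: l => by
      obtain ⟨P, Ls, hP, hLs, hflat, hlen⟩ := exists_chain_split b l
      by_cases hab : r a b
      · refine ⟨b :: P, Ls, isChain_cons_cons.2 ⟨hab, hP⟩, hLs, ?_, ?_⟩
        · simpa using hflat
        · simp [chainBreaks, hab, hlen]
      · refine ⟨[], (b :: P) :: Ls, by simp, ?_, ?_, ?_⟩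
        · simpa [hP] using hLs
        · simpa using hflat
        · simp [chainBreaks, hab, hlen, Nat.add_comm]

theorem exists_chain_partition (l : List α) : ∃ Ls : List (List α),
    (∀ P ∈ Ls, P ≠ [] ∧ P.IsChain r) ∧ Ls.flatten = l ∧ Ls.length ≤ l.chainBreaks r + 1 := by
  cases l with
  | nil => exact ⟨[], by simp, rfl, by simp⟩
  | cons a l =>
    obtain ⟨P, Ls, hP, hLs, hflat, hlen⟩ := exists_chain_split (r := r) a l
    refine ⟨(a :: P) :: Ls, ?_, by simpa using hflat, by simp [hlen]⟩
    simpa [hP] using hLs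

theorem length_eq_card_of_nodup_of_forall_mem [Fintype α] {l : List α}
    (hl : l.Nodup) (hmem : ∀ a, a ∈ l) : l.length = Fintype.card α := by
  classical
  rw [← toFinset_card_of_nodup hl,
    Finset.eq_univ_of_forall fun a => mem_toFinset.2 (hmem a), Finset.card_univ]

end List

theorem pathWeight_ite {α : Type*} (r : α → α → Prop) [DecidableRel r] {p q : ℕ} (hpq : p ≤ q) :
    ∀ l : List α, pathWeight (fun u v => if r u v then p else q) l
      = p * (l.length - 1) + (q - p) * l.chainBreaks r
  | [] | [_] => by simp [pathWeight, List.chainBreaks]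
  | a :: b :: rest => by
      have ih := pathWeight_ite r hpq (b :: rest)
      simp only [pathWeight, List.chainBreaks, ih, List.length_cons, Nat.add_sub_cancel]
      split
      · ring
      · rw [Nat.mul_add, Nat.mul_add]
        omega

theorem Nat.sInf_eq_of_forall_exists_le {A B : Set ℕ} {f : ℕ → ℕ} (hf : Monotone f)
    (hA : A.Nonempty) (hAB : ∀ s ∈ A, ∃ t ∈ B, f t ≤ s) (hBA : ∀ t ∈ B, ∃ s ∈ A, s ≤ f t) :
    sInf A = f (sInf B) := by
  obtain ⟨t, htB, ht⟩ := hAB _ (Nat.sInf_mem hA)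
  obtain ⟨s, hsA, hs⟩ := hBA _ (Nat.sInf_mem ⟨t, htB⟩)
  exact le_antisymm ((Nat.sInf_le hsA).trans hs) ((hf (Nat.sInf_le htB)).trans ht)

theorem min_hamiltonian_path_eq_path_partition_general {V : Type*} [Fintype V]
    (G : SimpleGraph V) [DecidableRel G.Adj] (p q : ℕ) (hpq : p ≤ q) :
    sInf {s | ∃ L : List V, L.Nodup ∧ (∀ v : V, v ∈ L) ∧
        pathWeight (fun u v => if G.Adj u v then p else q) L = s} =
      (Fintype.card V - 1) * p +
        (q - p) * (sInf {t | ∃ Ls : List (List V),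
          (∀ P ∈ Ls, P ≠ []) ∧ (∀ P ∈ Ls, P.Chain' G.Adj) ∧
          Ls.flatten.Nodup ∧ (∀ v : V, v ∈ Ls.flatten) ∧ Ls.length = t} - 1) := by
  have hweight : ∀ L : List V, L.Nodup → (∀ v, v ∈ L) →
      pathWeight (fun u v => if G.Adj u v then p else q) L
        = (Fintype.card V - 1) * p + (q - p) * L.chainBreaks G.Adj := fun L hL hmem => by
    rw [pathWeight_ite _ hpq, List.length_eq_card_of_nodup_of_forall_mem hL hmem, Nat.mul_comm p]
  refine Nat.sInf_eq_of_forall_exists_le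
    (f := fun t => (Fintype.card V - 1) * p + (q - p) * (t - 1))
    (fun _ _ h => by dsimp only; gcongr) ?_ ?_ ?_
  · exact ⟨_, Finset.univ.toList, Finset.nodup_toList _, by simp, rfl⟩
  · rintro _ ⟨L, hL, hmem, rfl⟩
    obtain ⟨Ls, hLs, rfl, hlen⟩ := List.exists_chain_partition (r := G.Adj) L
    refine ⟨_, ⟨Ls, fun P hP => (hLs P hP).1, fun P hP => (hLs P hP).2, hL, hmem, rfl⟩, ?_⟩
    rw [hweight _ hL hmem]
    gcongr
    omega
  · rintro _ ⟨Ls, -, hch, hL, hmem, rfl⟩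
    refine ⟨_, ⟨Ls.flatten, hL, hmem, rfl⟩, ?_⟩
    rw [hweight _ hL hmem]
    gcongr
    exact List.chainBreaks_flatten_le hch

/-- Let `H` be the complete graph on `n` vertices whose edges have weight `p` on the
edges of a graph `G` and weight `q ≥ p` elsewhere. Then the minimum weight of a
hamiltonian path in `H` equals `(n − 1)·p + (q − p)·(s* − 1)`, where `s*` is the
minimum number of vertex-disjoint paths of `G` (single vertices allowed) needed to
partition the vertex set. -/
theorem min_hamiltonian_path_eq_path_partition {V : Type*} [Fintype V] [Nonempty V]
    (G : SimpleGraph V) [DecidableRel G.Adj] (p q : ℕ) (hpq : p ≤ q) :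
    sInf {s | ∃ L : List V, L.Nodup ∧ (∀ v : V, v ∈ L) ∧
        pathWeight (fun u v => if G.Adj u v then p else q) L = s} =
      (Fintype.card V - 1) * p +
        (q - p) * (sInf {t | ∃ Ls : List (List V),
          (∀ P ∈ Ls, P ≠ []) ∧ (∀ P ∈ Ls, P.Chain' G.Adj) ∧
          Ls.flatten.Nodup ∧ (∀ v : V, v ∈ Ls.flatten) ∧ Ls.length = t} - 1) :=
  min_hamiltonian_path_eq_path_partition_general G p q hpq
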